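/- Let A₈ ∈ ℝ^{8×8} be the matrix of the linear map (z₁,…,z₈) ↦ (z₂, z₃+z₅+z₇, z₄+z₇, 0, z₆, 0, z₈, 0) and let B₈ ∈ ℝ^{8×3} have columns e₆, e₈, e₄ (standard basis of ℝ⁸). Then for the output rows e₁, e₃, e₄: e₁ᵀA₈ᵏB₈ = 0 for k ∈ {0,1,2} and e₁ᵀA₈³B₈ = (1,1,1) ≠ 0, so z₁ has relative degree 4; e₃ᵀB₈ = 0 and e₃ᵀA₈B₈ = (0,0,1) ≠ 0, so z₃ has relative degree 2; e₄ᵀB₈ = (0,0,1) ≠ 0, so z₄ has relative degree 1. The relative degrees sum to 4+2+1 = 7 < 8 = n, so the output (x₁, x₃, x₄) is not a flat output of this 8-dimensional prolonged system. -/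

import Mathlib

open Matrix

/-- For the linear system `ẋ = A x + B u`, the scalar output `y = cᵀ x`
has relative degree `r`: `cᵀ Aᵏ B = 0` for all `0 ≤ k ≤ r − 2`
and `cᵀ A^(r−1) B ≠ 0`. -/
def HasRelDeg {n m : ℕ} (A : Matrix (Fin n) (Fin n) ℝ)
    (B : Matrix (Fin n) (Fin m) ℝ) (c : Fin n → ℝ) (r : ℕ) : Prop :=
  0 < r ∧ (∀ k : ℕ, k + 1 < r → Matrix.vecMul c (A ^ k * B) = 0) ∧
    Matrix.vecMul c (A ^ (r - 1) * B) ≠ 0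

/-- Decoupling matrix: its `i`-th row is `cᵢᵀ A^(rᵢ−1) B`. -/
def Decoupling {n m q : ℕ} (A : Matrix (Fin n) (Fin n) ℝ)
    (B : Matrix (Fin n) (Fin m) ℝ) (c : Fin q → Fin n → ℝ) (r : Fin q → ℕ) :
    Matrix (Fin q) (Fin m) ℝ :=
  fun i => Matrix.vecMul (c i) (A ^ (r i - 1) * B)

/-- Flat (exactly state-space linearizing) output: each `cᵢ` has relative
degree `rᵢ`, the relative degrees sum to the state dimension `n`, and the
(square) decoupling matrix is invertible. -/
def IsFlatOutput {n m : ℕ} (A : Matrix (Fin n) (Fin n) ℝ)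
    (B : Matrix (Fin n) (Fin m) ℝ) (c : Fin m → Fin n → ℝ) (r : Fin m → ℕ) : Prop :=
  (∀ i, HasRelDeg A B (c i) (r i)) ∧ (∑ i, r i) = n ∧
    IsUnit (Decoupling A B c r).det

/-- Controllability matrix `[B, AB, …, A^(n−1)B]`, with columns indexed by
`Fin n × Fin m` (the `(k, j)` column is `Aᵏ` times the `j`-th column of `B`). -/
def CtrbMat {n m : ℕ} (A : Matrix (Fin n) (Fin n) ℝ)
    (B : Matrix (Fin n) (Fin m) ℝ) : Matrix (Fin n) (Fin n × Fin m) ℝ :=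
  fun i p => (A ^ (p.1 : ℕ) * B) i p.2

/-- Drift matrix of the prolonged system `Σ^(2,2,0)`:
`(z₁,…,z₈) ↦ (z₂, z₃+z₅+z₇, z₄+z₇, 0, z₆, 0, z₈, 0)`. -/
def A8 : Matrix (Fin 8) (Fin 8) ℝ :=
  !![0,1,0,0,0,0,0,0;
     0,0,1,0,1,0,1,0;
     0,0,0,1,0,0,1,0;
     0,0,0,0,0,0,0,0;
     0,0,0,0,0,1,0,0;
     0,0,0,0,0,0,0,0;
     0,0,0,0,0,0,0,1;
     0,0,0,0,0,0,0,0]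

/-- Input matrix of `Σ^(2,2,0)`: columns `e₆`, `e₈`, `e₄`. -/
def B8 : Matrix (Fin 8) (Fin 3) ℝ :=
  !![0,0,0; 0,0,0; 0,0,0; 0,0,1; 0,0,0; 1,0,0; 0,0,0; 0,1,0]

/-!
Relative degrees are unique, so a flat output with rows `e₁, e₃, e₄` would need
`r = (4, 2, 1)`, whose sum `7` falls short of the state dimension `8`.
-/

theorem HasRelDeg.unique {n m : ℕ} {A : Matrix (Fin n) (Fin n) ℝ}
    {B : Matrix (Fin n) (Fin m) ℝ} {c : Fin n → ℝ} {r s : ℕ}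
    (hr : HasRelDeg A B c r) (hs : HasRelDeg A B c s) : r = s := by
  obtain ⟨hr_pos, hr_zero, hr_ne⟩ := hr
  obtain ⟨hs_pos, hs_zero, hs_ne⟩ := hs
  by_contra hne
  rcases Nat.lt_or_gt_of_ne hne with hlt | hlt
  · exact hr_ne (hs_zero (r - 1) (by omega))
  · exact hs_ne (hr_zero (s - 1) (by omega))

theorem not_isFlatOutput_of_sum_ne {n m : ℕ} {A : Matrix (Fin n) (Fin n) ℝ}
    {B : Matrix (Fin n) (Fin m) ℝ} {c : Fin m → Fin n → ℝ} {r₀ : Fin m → ℕ}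
    (hr₀ : ∀ i, HasRelDeg A B (c i) (r₀ i)) (hsum : ∑ i, r₀ i ≠ n) (r : Fin m → ℕ) :
    ¬ IsFlatOutput A B c r := by
  rintro ⟨hr, hr_sum, -⟩
  obtain rfl : r = r₀ := funext fun i => (hr i).unique (hr₀ i)
  exact hsum hr_sum

theorem e₁_vecMul_A8_pow_mul_B8 {k : ℕ} (hk : k ≤ 2) :
    vecMul ![1,0,0,0,0,0,0,0] (A8 ^ k * B8) = 0 := by
  interval_cases k <;> ext j <;> fin_cases j <;>
    simp [A8, B8, pow_succ, vecMul, dotProduct, mul_apply, Fin.sum_univ_succ]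

theorem e₁_vecMul_A8_pow_three_mul_B8 :
    vecMul ![1,0,0,0,0,0,0,0] (A8 ^ 3 * B8) = ![1,1,1] := by
  ext j; fin_cases j <;> simp [A8, B8, pow_succ, vecMul, dotProduct, mul_apply, Fin.sum_univ_succ]

theorem e₃_vecMul_B8 : vecMul ![0,0,1,0,0,0,0,0] B8 = 0 := by
  ext j; fin_cases j <;> simp [B8, vecMul, dotProduct, Fin.sum_univ_succ]

theorem e₃_vecMul_A8_mul_B8 : vecMul ![0,0,1,0,0,0,0,0] (A8 * B8) = ![0,0,1] := by
  ext j; fin_cases j <;> simp [A8, B8, vecMul, dotProduct, mul_apply, Fin.sum_univ_succ]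

theorem e₄_vecMul_B8 : vecMul ![0,0,0,1,0,0,0,0] B8 = ![0,0,1] := by
  ext j; fin_cases j <;> simp [B8, vecMul, dotProduct, Fin.sum_univ_succ]

theorem hasRelDeg_e₁ : HasRelDeg A8 B8 ![1,0,0,0,0,0,0,0] 4 :=
  ⟨by norm_num, fun _ hk => e₁_vecMul_A8_pow_mul_B8 (by omega),
    by simp [e₁_vecMul_A8_pow_three_mul_B8]⟩

theorem hasRelDeg_e₃ : HasRelDeg A8 B8 ![0,0,1,0,0,0,0,0] 2 := by
  refine ⟨by norm_num, fun k hk => ?_, ?_⟩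
  · obtain rfl : k = 0 := by omega
    simpa using e₃_vecMul_B8
  · simp [e₃_vecMul_A8_mul_B8]

theorem hasRelDeg_e₄ : HasRelDeg A8 B8 ![0,0,0,1,0,0,0,0] 1 :=
  ⟨by norm_num, fun _ hk => by omega, by simp [e₄_vecMul_B8]⟩

/-- on `Σ^(2,2,0)`, the outputs `z₁, z₃, z₄` have relative
degrees `4, 2, 1` summing to `7 < 8 = n`; hence `(x₁, x₃, x₄)` is not a flat
output of this 8-dimensional prolonged system. -/
theorem stmt_11 :
    (∀ k : ℕ, k ≤ 2 → Matrix.vecMul ![1,0,0,0,0,0,0,0] (A8 ^ k * B8) = 0) ∧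
    Matrix.vecMul ![1,0,0,0,0,0,0,0] (A8 ^ 3 * B8) = ![1,1,1] ∧
    (![1,1,1] : Fin 3 → ℝ) ≠ 0 ∧
    HasRelDeg A8 B8 ![1,0,0,0,0,0,0,0] 4 ∧
    Matrix.vecMul ![0,0,1,0,0,0,0,0] B8 = 0 ∧
    Matrix.vecMul ![0,0,1,0,0,0,0,0] (A8 * B8) = ![0,0,1] ∧
    (![0,0,1] : Fin 3 → ℝ) ≠ 0 ∧
    HasRelDeg A8 B8 ![0,0,1,0,0,0,0,0] 2 ∧
    Matrix.vecMul ![0,0,0,1,0,0,0,0] B8 = ![0,0,1] ∧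
    HasRelDeg A8 B8 ![0,0,0,1,0,0,0,0] 1 ∧
    (4 + 2 + 1 = 7 ∧ (7 : ℕ) < 8) ∧
    (∀ r : Fin 3 → ℕ,
      ¬ IsFlatOutput A8 B8
        ![![1,0,0,0,0,0,0,0], ![0,0,1,0,0,0,0,0], ![0,0,0,1,0,0,0,0]] r) := by
  refine ⟨fun _ => e₁_vecMul_A8_pow_mul_B8, e₁_vecMul_A8_pow_three_mul_B8,
    by simp, hasRelDeg_e₁, e₃_vecMul_B8, e₃_vecMul_A8_mul_B8,
    by simp, hasRelDeg_e₃, e₄_vecMul_B8, hasRelDeg_e₄, ⟨rfl, by norm_num⟩, ?_⟩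
  refine not_isFlatOutput_of_sum_ne (r₀ := ![4, 2, 1]) (fun i => ?_) (by simp [Fin.sum_univ_three])
  fin_cases i
  exacts [hasRelDeg_e₁, hasRelDeg_e₃, hasRelDeg_e₄]
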